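/- Let k ≥ 4 be even. For every integer j ≥ 0: (d^j/dz^j) E_k(z) = (−1)^j ((k+j−1)!/(k−1)!) · Q_k(z,j;0); and for every integer m ≥ 1: (d^j/dz^j) P_k(z;m) = Σ_{l=0}^j (−1)^{l+j} (2πim)^l (j!/l!) · C(k+j−1, k+l−1) · Q_{k+2l}(z, j−l; m). -/

import Mathlib

noncomputable section

open Complex Filter MeasureTheory

abbrev SL2Z := Matrix.SpecialLinearGroup (Fin 2) ℤ
abbrev SL2R := Matrix.SpecialLinearGroup (Fin 2) ℝ

/-- `j(γ,z) = cz+d` for `γ ∈ SL(2,ℤ)`. -/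
def jZ (γ : SL2Z) (z : ℂ) : ℂ := ((γ 1 0 : ℤ) : ℂ) * z + ((γ 1 1 : ℤ) : ℂ)

/-- The Möbius action `γz = (az+b)/(cz+d)` for `γ ∈ SL(2,ℤ)`. -/
def actZ (γ : SL2Z) (z : ℂ) : ℂ := (((γ 0 0 : ℤ) : ℂ) * z + ((γ 0 1 : ℤ) : ℂ)) / jZ γ z

/-- `j(γ,z) = cz+d` for `γ ∈ SL(2,ℝ)`. -/
def jR (γ : SL2R) (z : ℂ) : ℂ := ((γ 1 0 : ℝ) : ℂ) * z + ((γ 1 1 : ℝ) : ℂ)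

/-- The Möbius action for `γ ∈ SL(2,ℝ)`. -/
def actR (γ : SL2R) (z : ℂ) : ℂ := (((γ 0 0 : ℝ) : ℂ) * z + ((γ 0 1 : ℝ) : ℂ)) / jR γ z

/-- Coprime pairs `(c,d)`, parametrizing the cosets `B\Γ` via the bottom row. -/
def CP : Type := {p : ℤ × ℤ // IsCoprime p.1 p.2}

/-- Coprime pairs with normalized sign, parametrizing `Γ∞\Γ` via the bottom row. -/
def CP1 : Type := {p : ℤ × ℤ // IsCoprime p.1 p.2 ∧ (0 < p.1 ∨ (p.1 = 0 ∧ 0 < p.2))}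

/-- `j(γ,z) = cz+d` in terms of the bottom row. -/
def jP (p : ℤ × ℤ) (z : ℂ) : ℂ := (p.1 : ℂ) * z + (p.2 : ℂ)

/-- `c_{γδ⁻¹} = c_γ d_δ − d_γ c_δ` in terms of the bottom rows of `γ, δ`. -/
def crossP (p q : ℤ × ℤ) : ℤ := p.1 * q.2 - p.2 * q.1

/-- `Im(γz) = Im z / |cz+d|²` in terms of the bottom row of `γ`. -/
def imP (p : ℤ × ℤ) (z : ℂ) : ℝ := z.im / Complex.normSq (jP p z)

/-- A representative Möbius action for a coset with bottom row the coprime pair `(c,d)`: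
choosing `a, b` with `ad−bc = 1`, return `(az+b)/(cz+d)`. -/
def mobiusP (p : ℤ × ℤ) (h : IsCoprime p.1 p.2) (z : ℂ) : ℂ :=
  ((h.choose_spec.choose : ℂ) * z - (h.choose : ℂ)) / jP p z

def mobiusCP (p : CP) (z : ℂ) : ℂ := mobiusP p.1 p.2 z
def mobiusCP1 (p : CP1) (z : ℂ) : ℂ := mobiusP p.1 p.2.1 z

/-- The term of the double Eisenstein series `E_{s,k-s}(z,w)`. -/
def dblEisTerm (k : ℤ) (s w : ℂ) (z : ℂ) (pq : CP × CP) : ℂ :=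
  if 0 < crossP pq.1.1 pq.2.1 then
    ((crossP pq.1.1 pq.2.1 : ℤ) : ℂ) ^ (w - 1) * (jP pq.1.1 z / jP pq.2.1 z) ^ (-s) *
      (jP pq.2.1 z) ^ (-k)
  else 0

/-- The double Eisenstein series `E_{s,k-s}(z,w)`. -/
def dblEis (k : ℤ) (s w : ℂ) (z : ℂ) : ℂ := ∑' pq : CP × CP, dblEisTerm k s w z pq

/-- The completing factor for `E*_{s,k-s}(z,w)`. -/
def eisFactor (k : ℤ) (s w : ℂ) : ℂ :=
  Complex.exp (s * Real.pi * I / 2) * Complex.Gamma s * Complex.Gamma ((k : ℂ) - s) *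
      Complex.Gamma ((k : ℂ) - w) * riemannZeta (1 - w + s) * riemannZeta (1 - w + (k : ℂ) - s) /
    ((2 : ℂ) ^ ((3 : ℂ) - w) * (Real.pi : ℂ) ^ ((k : ℂ) + 1 - w) * Complex.Gamma ((k : ℂ) - 1))

/-- The completed double Eisenstein series `E*_{s,k-s}(z,w)`. -/
def dblEisStar (k : ℤ) (s w : ℂ) (z : ℂ) : ℂ := eisFactor k s w * dblEis k s w z

/-- The weight-`k` Hecke operator `T_n`. -/
def hecke (k : ℤ) (n : ℕ) (f : ℂ → ℂ) (z : ℂ) : ℂ :=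
  (n : ℂ) ^ (k - 1) * ∑ p ∈ n.divisorsAntidiagonal,
    ((p.2 : ℕ) : ℂ) ^ (-k) * ∑ b ∈ Finset.range p.2, f (((p.1 : ℂ) * z + (b : ℂ)) / (p.2 : ℂ))

/-- The completed `L`-function `L*(f,s) = ∫_0^∞ f(iy) y^{s-1} dy`. -/
def Lstar (f : ℂ → ℂ) (s : ℂ) : ℂ := ∫ y in Set.Ioi (0 : ℝ), f ((y : ℂ) * I) * (y : ℂ) ^ (s - 1)

/-- The twisted completed `L`-function `L*(f,s;x) = ∫_0^∞ f(iy+x) y^{s-1} dy`. -/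
def LstarT (f : ℂ → ℂ) (s : ℂ) (x : ℚ) : ℂ :=
  ∫ y in Set.Ioi (0 : ℝ), f ((x : ℂ) + (y : ℂ) * I) * (y : ℂ) ^ (s - 1)

/-- The standard fundamental domain for `SL(2,ℤ)\ℍ`, as a subset of `ℝ²`. -/
def fundDom : Set (ℝ × ℝ) := {p | 0 < p.2 ∧ |p.1| ≤ 1 / 2 ∧ 1 ≤ p.1 ^ 2 + p.2 ^ 2}

/-- The Petersson inner product `⟨g,f⟩ = ∫_F g(z) conj(f(z)) y^k dx dy / y²`. -/
def petersson (k : ℤ) (g f : ℂ → ℂ) : ℂ :=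
  ∫ p in fundDom, g ((p.1 : ℂ) + (p.2 : ℂ) * I) * (starRingEnd ℂ) (f ((p.1 : ℂ) + (p.2 : ℂ) * I)) *
    ((p.2 : ℂ)) ^ (k - 2)

/-- `f` is a normalized Hecke eigenform of weight `k` for `SL(2,ℤ)`, with Fourier
coefficients `a`. -/
structure IsHeckeEigenform (k : ℤ) (f : ℂ → ℂ) (a : ℕ → ℂ) : Prop where
  holo : DifferentiableOn ℂ f {z : ℂ | 0 < z.im}
  transform : ∀ γ : SL2Z, ∀ z : ℂ, 0 < z.im → f (actZ γ z) = jZ γ z ^ k * f z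
  expansion : ∀ z : ℂ, 0 < z.im →
    HasSum (fun n : ℕ => a n * Complex.exp (2 * Real.pi * I * (n : ℂ) * z)) (f z)
  cusp : a 0 = 0
  normalized : a 1 = 1
  eigen : ∀ n : ℕ, 0 < n → ∃ lam : ℂ, ∀ z : ℂ, 0 < z.im → hecke k n f z = lam * f z

/-- The generalized Cohen kernel `C_k(z,s;x)`. -/
def cohen (k : ℤ) (s : ℂ) (x : ℚ) (z : ℂ) : ℂ :=
  (1 / 2) * ∑' γ : SL2Z, (actZ γ z + (x : ℂ)) ^ (-s) * (jZ γ z) ^ (-k)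

/-- The Poincaré series `P_k(z;m)` (over `Γ∞\Γ`). -/
def poincare (k : ℤ) (m : ℕ) (z : ℂ) : ℂ :=
  ∑' p : CP1, Complex.exp (2 * Real.pi * I * (m : ℂ) * mobiusCP1 p z) * (jP p.1 z) ^ (-k)

/-- The series `Q_k(z,l;m)`. -/
def Qser (k : ℤ) (l m : ℕ) (z : ℂ) : ℂ :=
  if l = 0 then poincare k m z
  else (1 / 2) * ∑' p : CP, Complex.exp (2 * Real.pi * I * (m : ℂ) * mobiusCP p z) *
    ((p.1.1 : ℂ)) ^ l * (jP p.1 z) ^ (-(k + (l : ℤ)))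

/-- The Rankin–Cohen bracket `[g₁,g₂]_n` of weights `k₁, k₂`. -/
def RC (k₁ k₂ n : ℕ) (g₁ g₂ : ℂ → ℂ) (z : ℂ) : ℂ :=
  ∑ r ∈ Finset.range (n + 1), (-1 : ℂ) ^ r * (Nat.choose (k₁ + n - 1) (n - r) : ℂ) *
    (Nat.choose (k₂ + n - 1) r : ℂ) * iteratedDeriv r g₁ z * iteratedDeriv (n - r) g₂ z

/-- The coefficient `A_{k₁,k₂}(l,u)_n`. -/
def Acoef (k₁ k₂ l u n : ℕ) : ℂ :=
  ((Nat.factorial (k₁ + n - 1) * Nat.factorial (k₂ + n - 1) : ℕ) : ℂ) /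
    ((Nat.factorial l * Nat.factorial u * Nat.factorial (n - l - u) *
      Nat.factorial (k₁ + l - 1) * Nat.factorial (k₂ + u - 1) : ℕ) : ℂ)

/-- The term of the double Poincaré series. -/
def dblPoinTerm (k₁ k₂ : ℤ) (w : ℂ) (m₁ m₂ : ℕ) (z : ℂ) (pq : CP × CP) : ℂ :=
  if 0 < crossP pq.1.1 pq.2.1 then
    ((crossP pq.1.1 pq.2.1 : ℤ) : ℂ) ^ (w - 1) *
      Complex.exp (2 * Real.pi * I * ((m₁ : ℂ) * mobiusCP pq.1 z + (m₂ : ℂ) * mobiusCP pq.2 z)) *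
      (jP pq.1.1 z) ^ (-k₁) * (jP pq.2.1 z) ^ (-k₂)
  else 0

/-- The double Poincaré series `P_{k₁,k₂}(z,w;m₁,m₂)`. -/
def dblPoin (k₁ k₂ : ℤ) (w : ℂ) (m₁ m₂ : ℕ) (z : ℂ) : ℂ :=
  ∑' pq : CP × CP, dblPoinTerm k₁ k₂ w m₁ m₂ z pq

/-- The double Eisenstein series `E_{k₁,k₂}(z,w)` with two integral weights. -/
def dblEis2 (k₁ k₂ : ℤ) (w : ℂ) (z : ℂ) : ℂ :=
  ∑' pq : CP × CP, if 0 < crossP pq.1.1 pq.2.1 then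
    ((crossP pq.1.1 pq.2.1 : ℤ) : ℂ) ^ (w - 1) * (jP pq.1.1 z) ^ (-k₁) * (jP pq.2.1 z) ^ (-k₂)
  else 0

/-- `f` transforms with weight `k` under `SL(2,ℤ)`. -/
def IsWeaklyModular (k : ℤ) (f : ℂ → ℂ) : Prop :=
  ∀ γ : SL2Z, ∀ z : ℂ, 0 < z.im → f (actZ γ z) = jZ γ z ^ k * f z

/-- `f` is a holomorphic modular form of weight `k` for `SL(2,ℤ)`. -/
def IsModularForm (k : ℤ) (f : ℂ → ℂ) : Prop :=
  DifferentiableOn ℂ f {z : ℂ | 0 < z.im} ∧ IsWeaklyModular k f ∧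
    ∃ C A : ℝ, ∀ z : ℂ, A ≤ z.im → ‖f z‖ ≤ C

/-- `f` is a holomorphic cusp form of weight `k` for `SL(2,ℤ)`. -/
def IsCuspForm (k : ℤ) (f : ℂ → ℂ) : Prop :=
  DifferentiableOn ℂ f {z : ℂ | 0 < z.im} ∧ IsWeaklyModular k f ∧
    Tendsto f (comap Complex.im atTop) (nhds 0)

/-- The term of the non-holomorphic kernel `K(z;s,s')`. -/
def KkerTerm (z s s' : ℂ) (γ : SL2Z) : ℂ :=
  (((actZ γ z).im : ℝ) : ℂ) ^ (s + s') / ((‖actZ γ z‖ : ℝ) : ℂ) ^ (2 * s)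

/-- The non-holomorphic kernel `K(z;s,s') = (1/2) Σ_{γ ∈ SL(2,ℤ)} Im(γz)^{s+s'}/|γz|^{2s}`. -/
def Kker (z s s' : ℂ) : ℂ := (1 / 2) * ∑' γ : SL2Z, KkerTerm z s s' γ

/-- The term of the non-holomorphic double Eisenstein series `ℰ(z,w;s,s')`. -/
def nhTerm (w s s' : ℂ) (z : ℂ) (pq : CP1 × CP1) : ℂ :=
  if crossP pq.1.1 pq.2.1 ≠ 0 then
    ((imP pq.1.1 z : ℝ) : ℂ) ^ s * ((imP pq.2.1 z : ℝ) : ℂ) ^ s' *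
      ((|crossP pq.1.1 pq.2.1| : ℤ) : ℂ) ^ (-w)
  else 0

/-- The non-holomorphic double Eisenstein series `ℰ(z,w;s,s')`. -/
def nhE (z : ℂ) (w s s' : ℂ) : ℂ := ∑' pq : CP1 × CP1, nhTerm w s s' z pq

/-- `g` is a cusp form of weight `k` with Fourier coefficients `b`. -/
structure IsCuspFormWithCoeffs (k : ℤ) (g : ℂ → ℂ) (b : ℕ → ℂ) : Prop where
  holo : DifferentiableOn ℂ g {z : ℂ | 0 < z.im}
  transform : ∀ γ : SL2Z, ∀ z : ℂ, 0 < z.im → g (actZ γ z) = jZ γ z ^ k * g z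
  expansion : ∀ z : ℂ, 0 < z.im →
    HasSum (fun n : ℕ => b n * Complex.exp (2 * Real.pi * I * (n : ℂ) * z)) (g z)
  czero : b 0 = 0

/-- The term of the quadruple-sum form of the double Eisenstein series:
`(ad−bc)^{w−1} ((az+b)/(cz+d))^{−s} (cz+d)^{−k}` for `ad−bc > 0`. -/
def quadTerm (k : ℤ) (s w : ℂ) (z : ℂ) (v : ℤ × ℤ × ℤ × ℤ) : ℂ :=
  if 0 < v.1 * v.2.2.2 - v.2.1 * v.2.2.1 then
    ((v.1 * v.2.2.2 - v.2.1 * v.2.2.1 : ℤ) : ℂ) ^ (w - 1) *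
      (((v.1 : ℂ) * z + (v.2.1 : ℂ)) / ((v.2.2.1 : ℂ) * z + (v.2.2.2 : ℂ))) ^ (-s) *
      ((v.2.2.1 : ℂ) * z + (v.2.2.2 : ℂ)) ^ (-k)
  else 0

/-- The twisted version: `(ad−bc)^{w−1} ((az+b)/(cz+d) + x)^{−s} (cz+d)^{−k}` for `ad−bc > 0`. -/
def quadTermT (k : ℤ) (s w : ℂ) (x : ℚ) (z : ℂ) (v : ℤ × ℤ × ℤ × ℤ) : ℂ :=
  if 0 < v.1 * v.2.2.2 - v.2.1 * v.2.2.1 then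
    ((v.1 * v.2.2.2 - v.2.1 * v.2.2.1 : ℤ) : ℂ) ^ (w - 1) *
      (((v.1 : ℂ) * z + (v.2.1 : ℂ)) / ((v.2.2.1 : ℂ) * z + (v.2.2.2 : ℂ)) + (x : ℂ)) ^ (-s) *
      ((v.2.2.1 : ℂ) * z + (v.2.2.2 : ℂ)) ^ (-k)
  else 0


/-!
Write `J = cz + d` for the bottom row `(c, d)` of `γ`. Since `(γz)' = J⁻²` and `J' = c`, the
summand `exp(2πimγz) cⁿ J^{-(K+n)}` of `Q_K(z,n;m)` has derivative
`2πim · exp(2πimγz) cⁿ J^{-(K+2+n)} - (K+n) · exp(2πimγz) cⁿ⁺¹ J^{-(K+n+1)}`,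
and the series may be differentiated termwise, as it converges locally uniformly by the
Eisenstein bound `|cz+d| ≥ r(z) ‖(c,d)‖`. Hence
`Q_K(·,n;m)' = 2πim Q_{K+2}(·,n;m) - (K+n) Q_K(·,n+1;m)`.
For even `K` the cosets of `±γ` contribute the same term, so at `n = 0` the sum over `B\Γ` is
twice the sum over `Γ∞\Γ`, i.e. `Q_K(·,0;m) = P_K(·;m)`. Iterating from `P_k`, the coefficient
`c(j,l)` of `Q_{k+2l}(·,j-l;m)` obeys `c(j+1,l+1) = 2πim c(j,l) - (k+j+l+1) c(j,l+1)`, and the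
closed form satisfies this recursion by Pascal's rule.
-/

open Finset

lemma jP_im (p : ℤ × ℤ) (z : ℂ) : (jP p z).im = p.1 * z.im := by
  simp [jP]

lemma jP_ne_zero {p : ℤ × ℤ} (hp : IsCoprime p.1 p.2) {z : ℂ} (hz : 0 < z.im) :
    jP p z ≠ 0 := by
  intro h
  have hc : p.1 = 0 := by
    have := jP_im p z
    rw [h, Complex.zero_im, eq_comm, mul_eq_zero] at this
    exact_mod_cast this.resolve_right hz.ne'
  have hd : p.2 = 0 := by simpa [jP, hc] using h
  exact not_isCoprime_zero_zero (hc ▸ hd ▸ hp)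

lemma hasDerivAt_jP (p : ℤ × ℤ) (z : ℂ) : HasDerivAt (jP p) (p.1 : ℂ) z := by
  have h := ((hasDerivAt_id z).const_mul (p.1 : ℂ)).add_const (p.2 : ℂ)
  rwa [mul_one] at h

lemma exists_mobiusP_eq {p : ℤ × ℤ} (hp : IsCoprime p.1 p.2) :
    ∃ u v : ℤ, u * p.1 + v * p.2 = 1 ∧ mobiusP p hp = fun z => (v * z - u) / jP p z :=
  ⟨_, _, hp.choose_spec.choose_spec, rfl⟩

lemma hasDerivAt_mobiusP {p : ℤ × ℤ} (hp : IsCoprime p.1 p.2) {z : ℂ} (hz : 0 < z.im) :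
    HasDerivAt (mobiusP p hp) ((jP p z ^ 2)⁻¹) z := by
  obtain ⟨u, v, huv, hmob⟩ := exists_mobiusP_eq hp
  rw [hmob]
  refine (((hasDerivAt_id z).const_mul (v : ℂ)).sub_const (u : ℂ) |>.div (hasDerivAt_jP p z)
    (jP_ne_zero hp hz)).congr_deriv ?_
  rw [inv_eq_one_div]
  congr 1
  have : (u : ℂ) * p.1 + v * p.2 = 1 := by exact_mod_cast huv
  simp only [jP, id]
  linear_combination this

lemma mobiusP_im {p : ℤ × ℤ} (hp : IsCoprime p.1 p.2) (z : ℂ) :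
    (mobiusP p hp z).im = z.im / Complex.normSq (jP p z) := by
  obtain ⟨u, v, huv, hmob⟩ := exists_mobiusP_eq hp
  have : (u : ℝ) * p.1 + v * p.2 = 1 := by exact_mod_cast huv
  rw [hmob, Complex.div_im, div_sub_div_same]
  congr 1
  simp only [jP, Complex.sub_im, Complex.sub_re, Complex.mul_im, Complex.mul_re, Complex.add_im,
    Complex.add_re, Complex.intCast_re, Complex.intCast_im]
  linear_combination z.im * this

lemma norm_exp_two_pi_I_mul_le_one (m : ℕ) {w : ℂ} (hw : 0 ≤ w.im) :
    ‖exp (2 * Real.pi * I * m * w)‖ ≤ 1 := by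
  rw [Complex.norm_exp, Real.exp_le_one_iff]
  have : (2 * Real.pi * I * m * w).re = -(2 * Real.pi * m * w.im) := by
    simp [Complex.mul_re, Complex.mul_im]
  rw [this, neg_nonpos]
  positivity

/-- The Möbius image of a coset `B γ` depends on the choice of the top row only up to an integer
translation. -/
lemma exp_mobius_eq_of_bezout {c d u v u' v' : ℤ} (h : u * c + v * d = 1)
    (h' : u' * c + v' * d = 1) (m : ℕ) {z : ℂ} (hJ : (c : ℂ) * z + d ≠ 0) :
    exp (2 * Real.pi * I * m * ((v * z - u) / (c * z + d))) =
      exp (2 * Real.pi * I * m * ((v' * z - u') / (c * z + d))) := by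
  have hC : (u : ℂ) * c + v * d = 1 := by exact_mod_cast h
  have hC' : (u' : ℂ) * c + v' * d = 1 := by exact_mod_cast h'
  have hshift : (v * z - u) / (c * z + d) =
      (v' * z - u') / (c * z + d) + ((u' * v - u * v' : ℤ) : ℂ) := by
    rw [div_add' _ _ _ hJ]
    congr 1
    push_cast
    linear_combination (z * v' - u') * hC + (u - z * v) * hC'
  rw [hshift, mul_add, Complex.exp_add,
    show 2 * Real.pi * I * m * ((u' * v - u * v' : ℤ) : ℂ) =
      ((m * (u' * v - u * v') : ℤ) : ℂ) * (2 * Real.pi * I) by push_cast; ring,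
    Complex.exp_int_mul_two_pi_mul_I, mul_one]

lemma exp_mobiusP_neg {c d : ℤ} (hp : IsCoprime c d) (hn : IsCoprime (-c) (-d)) (m : ℕ)
    {z : ℂ} (hz : 0 < z.im) :
    exp (2 * Real.pi * I * m * mobiusP (-c, -d) hn z) =
      exp (2 * Real.pi * I * m * mobiusP (c, d) hp z) := by
  obtain ⟨u, v, huv, hmob⟩ := exists_mobiusP_eq (p := (c, d)) hp
  obtain ⟨u', v', huv', hmob'⟩ := exists_mobiusP_eq (p := (-c, -d)) hn
  have hneg : mobiusP (-c, -d) hn z = ((-v' : ℤ) * z - (-u' : ℤ)) / (c * z + d) := by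
    rw [hmob', ← neg_div_neg_eq]
    simp only [jP]
    push_cast
    ring_nf
  rw [hneg, hmob]
  exact exp_mobius_eq_of_bezout (by linear_combination huv') huv m (jP_ne_zero hp hz)

def CP.neg (p : CP) : CP := ⟨(-p.1.1, -p.1.2), p.2.neg_left.neg_right⟩

def CP1.toCP (q : CP1) : CP := ⟨q.1, q.2.1⟩

lemma CP1.toCP_injective : Function.Injective CP1.toCP := fun _ _ h =>
  Subtype.ext (congrArg (fun p : CP => p.1) h)

lemma bijective_sumElim_toCP_neg :
    Function.Bijective (Sum.elim CP1.toCP (CP.neg ∘ CP1.toCP)) := by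
  constructor
  · rintro (q | q) (q' | q') h <;>
      obtain ⟨h1, h2⟩ := Prod.ext_iff.mp (congrArg (fun p : CP => p.1) h) <;>
      simp only [Sum.elim_inl, Sum.elim_inr, Function.comp_apply, CP1.toCP, CP.neg] at h1 h2 <;>
      have hq := q.2.2 <;> have hq' := q'.2.2
    · exact congrArg Sum.inl (Subtype.ext (Prod.ext h1 h2))
    · omega
    · omega
    · exact congrArg Sum.inr (Subtype.ext (Prod.ext (neg_inj.mp h1) (neg_inj.mp h2)))
  · rintro ⟨p, hp⟩
    by_cases hpos : 0 < p.1 ∨ (p.1 = 0 ∧ 0 < p.2)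
    · exact ⟨.inl ⟨p, hp, hpos⟩, rfl⟩
    · have : ¬(p.1 = 0 ∧ p.2 = 0) := fun h => not_isCoprime_zero_zero (h.1 ▸ h.2 ▸ hp)
      refine ⟨.inr ⟨(-p.1, -p.2), hp.neg_left.neg_right, by omega⟩, ?_⟩
      exact Subtype.ext (Prod.ext (neg_neg p.1) (neg_neg p.2))

lemma tsum_CP_eq_two_mul_tsum_CP1 {f : CP → ℂ} (hf : Summable f) (hneg : ∀ p, f p.neg = f p) :
    ∑' p, f p = 2 * ∑' q : CP1, f q.toCP := by
  let e : CP1 ⊕ CP1 ≃ CP := Equiv.ofBijective _ bijective_sumElim_toCP_neg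
  have hinl : f ∘ e ∘ Sum.inl = f ∘ CP1.toCP := rfl
  have hinr : f ∘ e ∘ Sum.inr = f ∘ CP1.toCP := funext fun q => hneg q.toCP
  have hsum : Summable (f ∘ CP1.toCP) := hf.comp_injective CP1.toCP_injective
  have H : HasSum (f ∘ e) (∑' q : CP1, f q.toCP + ∑' q : CP1, f q.toCP) :=
    HasSum.sum (by rw [Function.comp_assoc, hinl]; exact hsum.hasSum)
      (by rw [Function.comp_assoc, hinr]; exact hsum.hasSum)
  rw [← e.tsum_eq, two_mul]
  exact H.tsum_eq

/-- The summand of `Q_K(z,n;m)` for `n ≥ 1`, indexed by the bottom row of `γ ∈ B\Γ`. -/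
def Qterm (K : ℤ) (m n : ℕ) (p : CP) (z : ℂ) : ℂ :=
  Complex.exp (2 * Real.pi * I * (m : ℂ) * mobiusCP p z) * ((p.1.1 : ℂ)) ^ n *
    (jP p.1 z) ^ (-(K + (n : ℤ)))

/-- The `B\Γ`-sum defining `Q_K(z,n;m)` for `n ≥ 1`, taken also at `n = 0`. -/
def Qsum (K : ℤ) (m n : ℕ) (z : ℂ) : ℂ := (1 / 2) * ∑' p : CP, Qterm K m n p z

def CP.toFin2 (p : CP) : Fin 2 → ℤ := ![p.1.1, p.1.2]

lemma CP.toFin2_injective : Function.Injective CP.toFin2 := fun _ _ h =>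
  Subtype.ext (Prod.ext (congrFun h 0) (congrFun h 1))

lemma norm_Qterm_le (K : ℤ) (m n : ℕ) (p : CP) {w : ℂ} (hw : 0 < w.im) :
    ‖Qterm K m n p w‖ ≤ w.im⁻¹ ^ n * ‖jP p.1 w‖ ^ (-K) := by
  have hJ : 0 < ‖jP p.1 w‖ := norm_pos_iff.mpr (jP_ne_zero p.2 hw)
  have hexp : ‖exp (2 * Real.pi * I * m * mobiusCP p w)‖ ≤ 1 :=
    norm_exp_two_pi_I_mul_le_one m <| by
      rw [mobiusCP, mobiusP_im]
      exact div_nonneg hw.le (Complex.normSq_nonneg _)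
  -- `Im(cw+d) = c Im w` bounds `|c|` by `|cw+d| / Im w`
  have hc : ‖(p.1.1 : ℂ)‖ / ‖jP p.1 w‖ ≤ w.im⁻¹ := by
    rw [div_le_iff₀ hJ, inv_mul_eq_div, le_div_iff₀ hw, Complex.norm_intCast]
    simpa [abs_mul, abs_of_pos hw, jP_im] using Complex.abs_im_le_norm (jP p.1 w)
  calc ‖Qterm K m n p w‖
      = ‖exp (2 * Real.pi * I * m * mobiusCP p w)‖ *
          ((‖(p.1.1 : ℂ)‖ / ‖jP p.1 w‖) ^ n * ‖jP p.1 w‖ ^ (-K)) := by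
        rw [Qterm, norm_mul, norm_mul, norm_pow, norm_zpow, div_pow, neg_add, zpow_add₀ hJ.ne',
          zpow_neg ‖jP p.1 w‖ (n : ℤ), zpow_natCast]
        ring
    _ ≤ 1 * (w.im⁻¹ ^ n * ‖jP p.1 w‖ ^ (-K)) := by gcongr
    _ = _ := one_mul _

lemma norm_Qterm_le_of_mem_verticalStrip {K : ℤ} (hK : 0 ≤ K) (m n : ℕ) (p : CP) {A B : ℝ}
    (hB : 0 < B) {w : ℂ} (hwA : |w.re| ≤ A) (hwB : B ≤ w.im) :
    ‖Qterm K m n p w‖ ≤ B⁻¹ ^ n *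
      (EisensteinSeries.r ⟨⟨A, B⟩, hB⟩ ^ (-(K : ℝ)) * ‖p.toFin2‖ ^ (-(K : ℝ))) := by
  have hw : 0 < w.im := hB.trans_le hwB
  refine (norm_Qterm_le K m n p hw).trans ?_
  have hstrip := EisensteinSeries.summand_bound_of_mem_verticalStrip (z := ⟨w, hw⟩)
    (k := (K : ℝ)) (by exact_mod_cast hK) p.toFin2 hB ⟨hwA, hwB⟩
  rw [← Real.rpow_intCast, Int.cast_neg]
  gcongr
  exact hstrip

lemma summable_norm_toFin2_rpow {K : ℤ} (hK : 3 ≤ K) :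
    Summable fun p : CP => ‖p.toFin2‖ ^ (-(K : ℝ)) :=
  (EisensteinSeries.summable_one_div_norm_rpow (by exact_mod_cast hK)).comp_injective
    CP.toFin2_injective

lemma summable_Qterm {K : ℤ} (hK : 3 ≤ K) (m n : ℕ) {z : ℂ} (hz : 0 < z.im) :
    Summable fun p : CP => Qterm K m n p z :=
  .of_norm_bounded (((summable_norm_toFin2_rpow hK).mul_left _).mul_left _)
    fun p => norm_Qterm_le_of_mem_verticalStrip (by omega) m n p hz le_rfl le_rfl

lemma hasDerivAt_Qterm (K : ℤ) (m n : ℕ) (p : CP) {z : ℂ} (hz : 0 < z.im) :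
    HasDerivAt (Qterm K m n p)
      (2 * Real.pi * I * m * Qterm (K + 2) m n p z - (K + n) * Qterm K m (n + 1) p z) z := by
  have hJ : jP p.1 z ≠ 0 := jP_ne_zero p.2 hz
  have hexp := ((hasDerivAt_mobiusP p.2 hz).const_mul (2 * Real.pi * I * (m : ℂ))).cexp
  have hpow := (hasDerivAt_zpow (-(K + n)) (jP p.1 z) (.inl hJ)).comp z (hasDerivAt_jP p.1 z)
  refine ((hexp.mul_const ((p.1.1 : ℂ) ^ n)).mul hpow).congr_deriv ?_
  have e1 : jP p.1 z ^ (-(K + 2 + n)) = jP p.1 z ^ (-(K + n)) * (jP p.1 z ^ 2)⁻¹ := by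
    rw [← zpow_natCast, ← zpow_neg, ← zpow_add₀ hJ]
    ring_nf
  have e2 : jP p.1 z ^ (-(K + ((n + 1 : ℕ) : ℤ))) = jP p.1 z ^ (-(K + n) - 1) := by
    push_cast
    ring_nf
  simp only [Qterm, e1, e2, mobiusCP, Function.comp_apply]
  push_cast
  ring

lemma hasDerivAt_Qsum {K : ℤ} (hK : 3 ≤ K) (m n : ℕ) {z : ℂ} (hz : 0 < z.im) :
    HasDerivAt (Qsum K m n)
      (2 * Real.pi * I * m * Qsum (K + 2) m n z - (K + n) * Qsum K m (n + 1) z) z := by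
  set V : Set ℂ := {w | |w.re| < |z.re| + 1 ∧ z.im / 2 < w.im}
  have hV : IsOpen V :=
    (isOpen_lt continuous_re.abs continuous_const).inter (isOpen_lt continuous_const continuous_im)
  have hzV : z ∈ V := ⟨by linarith, by linarith⟩
  have hB : 0 < z.im / 2 := by positivity
  have hVim : ∀ w ∈ V, 0 < w.im := fun w hw => hB.trans hw.2
  set r := EisensteinSeries.r ⟨⟨|z.re| + 1, z.im / 2⟩, hB⟩
  have hbound : ∀ p w, w ∈ V → ‖Qterm K m n p w‖ ≤
      (z.im / 2)⁻¹ ^ n * (r ^ (-(K : ℝ)) * ‖p.toFin2‖ ^ (-(K : ℝ))) :=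
    fun p w hw => norm_Qterm_le_of_mem_verticalStrip (by omega) m n p hB hw.1.le hw.2.le
  have hu :=
    ((summable_norm_toFin2_rpow hK).mul_left (r ^ (-(K : ℝ)))).mul_left ((z.im / 2)⁻¹ ^ n)
  have hdiff : ∀ p, DifferentiableOn ℂ (Qterm K m n p) V := fun p w hw =>
    (hasDerivAt_Qterm K m n p (hVim w hw)).differentiableAt.differentiableWithinAt
  have hderiv : deriv (fun w => ∑' p, Qterm K m n p w) z =
      2 * Real.pi * I * m * ∑' p, Qterm (K + 2) m n p z -
        (K + n) * ∑' p, Qterm K m (n + 1) p z := by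
    rw [← (Complex.hasSum_deriv_of_summable_norm hu hdiff hV hbound hzV).tsum_eq,
      ← tsum_mul_left, ← tsum_mul_left, ← Summable.tsum_sub
        ((summable_Qterm (by omega) m n hz).mul_left _) ((summable_Qterm hK m _ hz).mul_left _)]
    exact tsum_congr fun p => (hasDerivAt_Qterm K m n p hz).deriv
  have htsum := ((Complex.differentiableOn_tsum_of_summable_norm hu hdiff hV hbound)
    |>.differentiableAt (hV.mem_nhds hzV)).hasDerivAt
  rw [hderiv] at htsum
  refine (htsum.const_mul (1 / 2 : ℂ)).congr_deriv ?_
  simp only [Qsum]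
  ring

lemma Qterm_neg {K : ℤ} (hK : Even K) (m n : ℕ) (p : CP) {z : ℂ} (hz : 0 < z.im) :
    Qterm K m n p.neg z = Qterm K m n p z := by
  have hsign : (-1 : ℂ) ^ n * (-1 : ℂ) ^ (-(K + n)) = 1 := by
    rw [← zpow_natCast, ← zpow_add₀ (by norm_num), show (n : ℤ) + -(K + n) = -K by ring]
    exact hK.neg.neg_one_zpow
  have hJ : jP p.neg.1 z = -1 * jP p.1 z := by
    simp only [jP, CP.neg]
    push_cast
    ring
  simp only [Qterm, mobiusCP, CP.neg] at hJ ⊢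
  rw [exp_mobiusP_neg p.2 _ m hz, hJ, Int.cast_neg, neg_eq_neg_one_mul (p.1.1 : ℂ), mul_pow,
    mul_zpow]
  linear_combination (exp (2 * Real.pi * I * m * mobiusP p.1 p.2 z) * (p.1.1 : ℂ) ^ n *
    jP p.1 z ^ (-(K + n))) * hsign

lemma poincare_eq_Qsum {K : ℤ} (hK : Even K) (hK3 : 3 ≤ K) (m : ℕ) {z : ℂ} (hz : 0 < z.im) :
    poincare K m z = Qsum K m 0 z := by
  rw [Qsum, tsum_CP_eq_two_mul_tsum_CP1 (summable_Qterm hK3 m 0 hz)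
    fun p => Qterm_neg hK m 0 p hz, ← mul_assoc, one_div_mul_cancel two_ne_zero, one_mul,
    poincare]
  simp [Qterm, mobiusCP, mobiusCP1, CP1.toCP]

lemma Qser_eq_Qsum {K : ℤ} (hK : Even K) (hK3 : 3 ≤ K) (m n : ℕ) {z : ℂ} (hz : 0 < z.im) :
    Qser K n m z = Qsum K m n z := by
  rcases n with _ | n
  · simpa [Qser] using poincare_eq_Qsum hK hK3 m hz
  · simp [Qser, Qsum, Qterm]

lemma succ_mul_choose_succ_add (k j : ℕ) :
    (j + 1) * (k + j + 1).choose k = (k + j + 1) * (k + j).choose k := by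
  have h := Nat.choose_mul_succ_eq (k + j) k
  rw [show k + j + 1 - k = j + 1 by omega] at h
  linarith

lemma succ_mul_choose_succ_add_succ (k j l : ℕ) (hl : l ≤ j) :
    (j + 1) * (k + j + 1).choose (k + l + 1) =
      (l + 1) * (k + j).choose (k + l) + (k + j + l + 2) * (k + j).choose (k + l + 1) := by
  have h := Nat.choose_succ_right_eq (k + j) (k + l)
  rw [show k + j - (k + l) = j - l by omega] at h
  obtain ⟨t, rfl⟩ := Nat.exists_eq_add_of_le hl
  rw [Nat.choose_succ_succ', show l + t - l = t by omega] at *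
  nlinarith

/-- The coefficient of `Q_{k+2l}(z, j-l; m)` in the `j`-th derivative of `P_k(z; m)`. -/
def derivCoeff (k m j l : ℕ) : ℂ :=
  (-1 : ℂ) ^ (l + j) * (2 * Real.pi * I * (m : ℂ)) ^ l *
    ((Nat.factorial j : ℂ) / (Nat.factorial l : ℂ)) * (Nat.choose (k + j - 1) (k + l - 1) : ℂ)

lemma derivCoeff_self_succ {k : ℕ} (hk : 1 ≤ k) (m j : ℕ) : derivCoeff k m j (j + 1) = 0 := by
  rw [derivCoeff, Nat.choose_eq_zero_of_lt (by omega), Nat.cast_zero, mul_zero]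

lemma derivCoeff_succ_zero {k : ℕ} (hk : 1 ≤ k) (m j : ℕ) :
    derivCoeff k m (j + 1) 0 = -(((k + j : ℕ) : ℂ) * derivCoeff k m j 0) := by
  obtain ⟨k, rfl⟩ := Nat.exists_eq_add_of_le' hk
  have h := congrArg (Nat.cast : ℕ → ℂ) (succ_mul_choose_succ_add k j)
  simp only [derivCoeff, show k + 1 + (j + 1) - 1 = k + j + 1 by omega,
    show k + 1 + j - 1 = k + j by omega, Nat.factorial_succ]
  push_cast at h ⊢
  field_simp
  linear_combination (-(-1 : ℂ) ^ j * j.factorial) * h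

lemma derivCoeff_succ_succ {k : ℕ} (hk : 1 ≤ k) (m : ℕ) {j l : ℕ} (hl : l ≤ j) :
    derivCoeff k m (j + 1) (l + 1) =
      2 * Real.pi * I * m * derivCoeff k m j l -
        ((k + j + (l + 1) : ℕ) : ℂ) * derivCoeff k m j (l + 1) := by
  obtain ⟨k, rfl⟩ := Nat.exists_eq_add_of_le' hk
  have h := congrArg (Nat.cast : ℕ → ℂ) (succ_mul_choose_succ_add_succ k j l hl)
  simp only [derivCoeff, show k + 1 + (j + 1) - 1 = k + j + 1 by omega,
    show k + 1 + j - 1 = k + j by omega, show k + 1 + (l + 1) - 1 = k + l + 1 by omega,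
    show k + 1 + l - 1 = k + l by omega, Nat.factorial_succ]
  push_cast at h ⊢
  field_simp
  rw [div_left_inj' (Nat.cast_ne_zero.mpr l.factorial_ne_zero)]
  linear_combination ((-1 : ℂ) ^ (l + j) * (2 * Real.pi * I * m) ^ (l + 1) * j.factorial) * h

lemma derivCoeff_zero_right {k : ℕ} (hk : 1 ≤ k) (m j : ℕ) :
    derivCoeff k m j 0 = (-1) ^ j * ((k + j - 1).factorial / (k - 1).factorial : ℂ) := by
  rw [derivCoeff, Nat.cast_choose ℂ (by omega : k + 0 - 1 ≤ k + j - 1),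
    show k + j - 1 - (k + 0 - 1) = j by omega, Nat.add_zero]
  have := Nat.cast_ne_zero (R := ℂ) |>.mpr j.factorial_ne_zero
  field_simp
  ring

lemma sum_range_mul_sub_eq_sum_range {c c' b G : ℕ → ℂ} {a : ℂ} {j : ℕ}
    (htop : c (j + 1) = 0) (h0 : c' 0 = -(b 0 * c 0))
    (hsucc : ∀ l ≤ j, c' (l + 1) = a * c l - b (l + 1) * c (l + 1)) :
    ∑ l ∈ range (j + 1), c l * (a * G (l + 1) - b l * G l) =
      ∑ l ∈ range (j + 2), c' l * G l := by
  have hshift : ∑ l ∈ range (j + 1), b l * c l * G l =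
      ∑ l ∈ range (j + 1), b (l + 1) * c (l + 1) * G (l + 1) + b 0 * c 0 * G 0 := by
    rw [sum_range_succ' _ j, sum_range_succ _ j, htop, mul_zero, zero_mul, add_zero]
  have hsucc' : ∑ l ∈ range (j + 1), c' (l + 1) * G (l + 1) =
      ∑ l ∈ range (j + 1), (a * c l * G (l + 1) - b (l + 1) * c (l + 1) * G (l + 1)) :=
    sum_congr rfl fun l hl => by
      rw [hsucc l (Nat.lt_succ_iff.mp (mem_range.mp hl))]
      ring
  calc ∑ l ∈ range (j + 1), c l * (a * G (l + 1) - b l * G l)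
      = ∑ l ∈ range (j + 1), a * c l * G (l + 1) -
          ∑ l ∈ range (j + 1), b l * c l * G l := by
        rw [← sum_sub_distrib]
        exact sum_congr rfl fun _ _ => by ring
    _ = ∑ l ∈ range (j + 2), c' l * G l := by
        rw [hshift, sum_range_succ' _ (j + 1), hsucc', h0, sum_sub_distrib]
        ring

theorem iteratedDeriv_Qsum {k : ℕ} (hk : 3 ≤ k) (m j : ℕ) {z : ℂ} (hz : 0 < z.im) :
    iteratedDeriv j (Qsum k m 0) z =
      ∑ l ∈ range (j + 1), derivCoeff k m j l * Qsum (k + 2 * l) m (j - l) z := by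
  induction j generalizing z with
  | zero => simp [derivCoeff]
  | succ j ih =>
    have hU : IsOpen {w : ℂ | 0 < w.im} := isOpen_lt continuous_const continuous_im
    have heq : iteratedDeriv j (Qsum k m 0) =ᶠ[nhds z]
        fun w => ∑ l ∈ range (j + 1), derivCoeff k m j l * Qsum (k + 2 * l) m (j - l) w :=
      Filter.eventually_of_mem (hU.mem_nhds hz) fun w hw => ih hw
    have hderiv := HasDerivAt.fun_sum fun l (_ : l ∈ range (j + 1)) =>
      (hasDerivAt_Qsum (K := k + 2 * l) (by omega) m (j - l) hz).const_mul (derivCoeff k m j l)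
    rw [iteratedDeriv_succ, heq.deriv_eq, hderiv.deriv]
    refine (sum_congr rfl fun l hl => ?_).trans (sum_range_mul_sub_eq_sum_range
      (c := derivCoeff k m j) (b := fun l => ((k + j + l : ℕ) : ℂ))
      (G := fun l => Qsum (k + 2 * l) m (j + 1 - l) z)
      (derivCoeff_self_succ (by omega) m j) (derivCoeff_succ_zero (by omega) m j)
      fun l hl => derivCoeff_succ_succ (by omega) m hl)
    have hlj : l ≤ j := Nat.lt_succ_iff.mp (mem_range.mp hl)
    have e1 : (k : ℤ) + 2 * l + 2 = k + 2 * (l + 1 : ℕ) := by push_cast; ring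
    have e2 : (((k + 2 * l : ℤ) : ℂ) + ((j - l : ℕ) : ℂ)) = ((k + j + l : ℕ) : ℂ) := by
      push_cast [Nat.cast_sub hlj]; ring
    simp only [e1, e2, show j + 1 - (l + 1) = j - l by omega, show j - l + 1 = j + 1 - l by omega]

theorem iteratedDeriv_poincare {k : ℕ} (hk : 3 ≤ k) (hke : Even k) (m j : ℕ) {z : ℂ}
    (hz : 0 < z.im) :
    iteratedDeriv j (poincare k m) z =
      ∑ l ∈ range (j + 1), derivCoeff k m j l * Qser (k + 2 * l) (j - l) m z := by
  have hk0 : Even (k : ℤ) := (Int.even_coe_nat k).mpr hke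
  have hkl : ∀ l : ℕ, Even ((k : ℤ) + 2 * l) := fun l => hk0.add (even_two_mul _)
  have hU : IsOpen {w : ℂ | 0 < w.im} := isOpen_lt continuous_const continuous_im
  rw [Set.EqOn.iteratedDeriv_of_isOpen (fun w hw => poincare_eq_Qsum hk0 (by omega) m hw)
    hU j hz, iteratedDeriv_Qsum hk m j hz]
  exact sum_congr rfl fun l _ => by rw [Qser_eq_Qsum (hkl l) (by omega) m _ hz]

/-- derivative formulas for Eisenstein and Poincaré series in terms of the
series `Q_k(z,l;m)`. -/
theorem statement10 (k : ℕ) (hk : 4 ≤ k) (hke : Even k) :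
    (∀ j : ℕ, ∀ z : ℂ, 0 < z.im →
      iteratedDeriv j (poincare (k : ℤ) 0) z =
        (-1 : ℂ) ^ j * ((Nat.factorial (k + j - 1) : ℂ) / (Nat.factorial (k - 1) : ℂ)) *
          Qser (k : ℤ) j 0 z) ∧
    (∀ j m : ℕ, 1 ≤ m → ∀ z : ℂ, 0 < z.im →
      iteratedDeriv j (poincare (k : ℤ) m) z =
        ∑ l ∈ Finset.range (j + 1), (-1 : ℂ) ^ (l + j) * (2 * Real.pi * I * (m : ℂ)) ^ l *
          ((Nat.factorial j : ℂ) / (Nat.factorial l : ℂ)) *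
          (Nat.choose (k + j - 1) (k + l - 1) : ℂ) * Qser ((k : ℤ) + 2 * l) (j - l) m z) := by
  refine ⟨fun j z hz => ?_, fun j m _ z hz => iteratedDeriv_poincare (by omega) hke m j hz⟩
  rw [iteratedDeriv_poincare (by omega) hke 0 j hz,
    sum_eq_single 0 (fun l _ hl => by simp [derivCoeff, hl]) (by simp),
    derivCoeff_zero_right (by omega)]
  simp
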